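/- arXiv:1711.09086 — 3 statements merged into one kernel-verified Lean document; each statement's English description precedes it below -/
import Mathlib

section
/- Let λ_1,…,λ_N ∈ ℂ and let σ be an involution of the index set {1,…,N} such that λ_{σ(n)} = conj(λ_n) for all n (so each graph frequency is real or belongs to a complex conjugate pair). Let ĥ ∈ ℂ^N satisfy ĥ_{σ(n)} = conj(ĥ_n) for all n. Let Ψ ∈ ℂ^{N×(K+1)} be the Vandermonde matrix with entries [Ψ]_{n,k} = λ_n^{k-1}, and suppose Ψ^H Ψ is invertible. Then the least-squares solution g = (Ψ^H Ψ)^{-1} Ψ^H ĥ of min_{g∈ℂ^{K+1}} ‖ĥ − Ψ g‖², i.e., the FIR graph filter coefficient vector, has all entries real. -/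
/-! Conjugation permutes the rows of the Vandermonde matrix `Ψ` and the entries of `ĥ` by the
same permutation `σ`, so it fixes the normal matrix `Ψᴴ Ψ` and the right-hand side `Ψᴴ ĥ`.
Since entrywise conjugation commutes with matrix inversion, it fixes `g = (Ψᴴ Ψ)⁻¹ Ψᴴ ĥ`. -/

open Matrix

namespace Matrix

variable {m n R : Type*} [CommRing R] [StarRing R]

theorem star_mulVec_eq_map_star_mulVec [Fintype n] (M : Matrix m n R) (v : n → R) :
    star (M *ᵥ v) = M.map star *ᵥ star v :=
  funext (RingHom.map_mulVec (starRingEnd R) M v)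

/-- Both sides are `0` when `A` is singular. -/
theorem inv_map_star [Fintype n] [DecidableEq n] (A : Matrix n n R) :
    A⁻¹.map star = (A.map star)⁻¹ := by
  have map_star_eq (B : Matrix n n R) : B.map star = Bᴴᵀ := rfl
  rw [map_star_eq, map_star_eq, conjTranspose_nonsing_inv, transpose_nonsing_inv]

theorem map_star_eq_submatrix_of_pow {p : ℕ} {x : m → R} (e : m ≃ m)
    (hx : ∀ i, x (e i) = star (x i)) (Ψ : Matrix m (Fin p) R)
    (hΨ : ∀ i k, Ψ i k = x i ^ (k : ℕ)) :
    Ψ.map star = Ψ.submatrix e id := by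
  ext i k
  simp only [map_apply, submatrix_apply, id, hΨ, hx, star_pow]

variable [Fintype m] {Ψ : Matrix m n R} {e : m ≃ m}

theorem map_star_conjTranspose_mul_self (hΨ : Ψ.map star = Ψ.submatrix e id) :
    (Ψᴴ * Ψ).map star = Ψᴴ * Ψ := by
  calc (Ψᴴ * Ψ).map star = (Ψᴴ * Ψ).map (starRingEnd R) := rfl
    _ = Ψᴴ.map (starRingEnd R) * Ψ.map (starRingEnd R) := Matrix.map_mul
    _ = (Ψ.map star)ᴴ * Ψ.map star := by
      rw [conjTranspose_map (starRingEnd R) (fun _ => rfl)]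
      rfl
    _ = Ψᴴ * Ψ := by
      rw [hΨ, conjTranspose_submatrix, submatrix_mul_equiv, submatrix_id_id]

theorem star_conjTranspose_mulVec (hΨ : Ψ.map star = Ψ.submatrix e id) {v : m → R}
    (hv : star v = v ∘ e) : star (Ψᴴ *ᵥ v) = Ψᴴ *ᵥ v := by
  rw [star_mulVec_eq_map_star_mulVec, conjTranspose_map _ (fun _ => rfl), hΨ, hv,
    conjTranspose_submatrix, submatrix_mulVec_equiv]
  simp only [Function.comp_assoc, Equiv.self_comp_symm, Function.comp_id]

theorem star_leastSquares_eq [Fintype n] [DecidableEq n] (hΨ : Ψ.map star = Ψ.submatrix e id)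
    {v : m → R} (hv : star v = v ∘ e) :
    star ((Ψᴴ * Ψ)⁻¹ *ᵥ (Ψᴴ *ᵥ v)) = (Ψᴴ * Ψ)⁻¹ *ᵥ (Ψᴴ *ᵥ v) := by
  rw [star_mulVec_eq_map_star_mulVec, inv_map_star, map_star_conjTranspose_mul_self hΨ,
    star_conjTranspose_mulVec hΨ hv]

end Matrix

theorem fir_lls_coefficients_real_general
    (N K : ℕ) (lam : Fin N → ℂ)
    (σ : Fin N → Fin N) (hσ : Function.Involutive σ)
    (hlam : ∀ n, lam (σ n) = starRingEnd ℂ (lam n))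
    (hhat : Fin N → ℂ)
    (hh : ∀ n, hhat (σ n) = starRingEnd ℂ (hhat n))
    (Ψ : Matrix (Fin N) (Fin (K + 1)) ℂ)
    (hΨ : ∀ n k, Ψ n k = lam n ^ (k : ℕ))
    (g : Fin (K + 1) → ℂ)
    (hg : g = (Ψᴴ * Ψ)⁻¹ *ᵥ (Ψᴴ *ᵥ hhat)) :
    ∀ k, (g k).im = 0 := by
  have hΨ_conj : Ψ.map star = Ψ.submatrix (hσ.toPerm σ) id :=
    map_star_eq_submatrix_of_pow _ hlam Ψ hΨ
  have hhat_conj : star hhat = hhat ∘ hσ.toPerm σ := funext fun n => (hh n).symm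
  have hg_conj : star g = g := hg ▸ star_leastSquares_eq hΨ_conj hhat_conj
  exact fun k => Complex.conj_eq_iff_im.mp (congrFun hg_conj k)

/-- The least-squares FIR graph filter coefficients are real-valued when the
graph frequencies and the desired frequency response are conjugate-symmetric. -/
theorem fir_lls_coefficients_real
    (N K : ℕ) (lam : Fin N → ℂ)
    (σ : Fin N → Fin N) (hσ : Function.Involutive σ)
    (hlam : ∀ n, lam (σ n) = starRingEnd ℂ (lam n))
    (hhat : Fin N → ℂ)
    (hh : ∀ n, hhat (σ n) = starRingEnd ℂ (hhat n))
    (Ψ : Matrix (Fin N) (Fin (K + 1)) ℂ)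
    (hΨ : ∀ n k, Ψ n k = lam n ^ (k : ℕ))
    (hinv : IsUnit (Ψᴴ * Ψ))
    (g : Fin (K + 1) → ℂ)
    (hg : g = (Ψᴴ * Ψ)⁻¹ *ᵥ (Ψᴴ *ᵥ hhat)) :
    ∀ k, (g k).im = 0 :=
  fir_lls_coefficients_real_general N K lam σ hσ hlam hhat hh Ψ hΨ g hg
end

section
/- Let λ_1,…,λ_N ∈ ℂ and let σ be an involution of {1,…,N} with λ_{σ(n)} = conj(λ_n) for all n, and let ĥ ∈ ℂ^N satisfy ĥ_{σ(n)} = conj(ĥ_n). Suppose (a,b) ∈ ℂ^{P+1} × ℂ^{Q+1} is the unique minimizer, subject to a_0 = 1, of the modified Prony error E(a,b) = Σ_{n=1}^N | ĥ_n (Σ_{p=0}^P a_p λ_n^p) − Σ_{q=0}^Q b_q λ_n^q |². Then all entries of a and b are real. -/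
/-!
Conjugating the coefficients of an ARMA design and reindexing the samples by the involution `σ`
conjugates every term of the modified Prony error, so `(conj a, conj b)` attains the same error as
`(a, b)` and still satisfies `a 0 = 1`. Uniqueness of the minimizer forces `conj a = a` and
`conj b = b`.
-/

section Prony

variable {𝕜 ι : Type*} {m k : ℕ}

def pronyResidual [CommRing 𝕜] (hhat lam : ι → 𝕜) (a : Fin m → 𝕜) (b : Fin k → 𝕜) (n : ι) : 𝕜 :=
  hhat n * ∑ p, a p * lam n ^ (p : ℕ) - ∑ q, b q * lam n ^ (q : ℕ)

def pronyError [RCLike 𝕜] [Fintype ι] (hhat lam : ι → 𝕜) (a : Fin m → 𝕜) (b : Fin k → 𝕜) : ℝ :=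
  ∑ n, ‖pronyResidual hhat lam a b n‖ ^ 2

theorem star_pronyResidual [CommRing 𝕜] [StarRing 𝕜] (hhat lam : ι → 𝕜) (a : Fin m → 𝕜)
    (b : Fin k → 𝕜) (n : ι) :
    star (pronyResidual hhat lam a b n) =
      pronyResidual (star hhat) (star lam) (star a) (star b) n := by
  simp only [pronyResidual, star_sub, star_mul', star_sum, star_pow, Pi.star_apply]

variable [RCLike 𝕜] [Fintype ι]

theorem pronyError_star (hhat lam : ι → 𝕜) (a : Fin m → 𝕜) (b : Fin k → 𝕜) :
    pronyError (star hhat) (star lam) (star a) (star b) = pronyError hhat lam a b := by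
  refine Finset.sum_congr rfl fun n _ => ?_
  rw [← star_pronyResidual, ← starRingEnd_apply, RCLike.norm_conj]

theorem pronyError_comp_perm (e : Equiv.Perm ι) (hhat lam : ι → 𝕜) (a : Fin m → 𝕜)
    (b : Fin k → 𝕜) :
    pronyError (hhat ∘ e) (lam ∘ e) a b = pronyError hhat lam a b :=
  Equiv.sum_comp e fun n => ‖pronyResidual hhat lam a b n‖ ^ 2

theorem pronyError_star_coeffs {σ : ι → ι} (hσ : Function.Involutive σ) {hhat lam : ι → 𝕜}
    (hh : hhat ∘ σ = star hhat) (hlam : lam ∘ σ = star lam) (a : Fin m → 𝕜) (b : Fin k → 𝕜) :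
    pronyError hhat lam (star a) (star b) = pronyError hhat lam a b := by
  calc pronyError hhat lam (star a) (star b)
      = pronyError (hhat ∘ σ) (lam ∘ σ) (star a) (star b) :=
        (pronyError_comp_perm (hσ.toPerm σ) hhat lam _ _).symm
    _ = pronyError hhat lam a b := by rw [hh, hlam, pronyError_star]

end Prony

theorem prony_ls_coefficients_real_general
    (N P Q : ℕ) (lam : Fin N → ℂ)
    (σ : Fin N → Fin N) (hσ : Function.Involutive σ)
    (hlam : ∀ n, lam (σ n) = starRingEnd ℂ (lam n))
    (hhat : Fin N → ℂ)
    (hh : ∀ n, hhat (σ n) = starRingEnd ℂ (hhat n))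
    (E : (Fin (P + 1) → ℂ) → (Fin (Q + 1) → ℂ) → ℝ)
    (hE : ∀ a b, E a b =
      ∑ n, ‖hhat n * (∑ p, a p * lam n ^ (p : ℕ))
        - ∑ q, b q * lam n ^ (q : ℕ)‖ ^ 2)
    (a : Fin (P + 1) → ℂ) (b : Fin (Q + 1) → ℂ)
    (ha0 : a 0 = 1)
    (huniq : ∀ a' b', a' 0 = 1 → E a' b' = E a b → a' = a ∧ b' = b) :
    (∀ p, (a p).im = 0) ∧ (∀ q, (b q).im = 0) := by
  have hE' : E = pronyError hhat lam := funext₂ hE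
  have hstar_a0 : star a 0 = 1 := by rw [Pi.star_apply, ha0, star_one]
  have hstar_E : E (star a) (star b) = E a b := by
    rw [hE']
    exact pronyError_star_coeffs hσ (funext hh) (funext hlam) a b
  obtain ⟨ha, hb⟩ := huniq _ _ hstar_a0 hstar_E
  exact ⟨fun p => Complex.conj_eq_iff_im.mp (congrFun ha p),
    fun q => Complex.conj_eq_iff_im.mp (congrFun hb q)⟩

/-- The unique minimizer of the modified Prony error subject to `a 0 = 1` has
real-valued ARMA coefficients, given conjugate-symmetric data. -/
theorem prony_ls_coefficients_real
    (N P Q : ℕ) (lam : Fin N → ℂ)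
    (σ : Fin N → Fin N) (hσ : Function.Involutive σ)
    (hlam : ∀ n, lam (σ n) = starRingEnd ℂ (lam n))
    (hhat : Fin N → ℂ)
    (hh : ∀ n, hhat (σ n) = starRingEnd ℂ (hhat n))
    (E : (Fin (P + 1) → ℂ) → (Fin (Q + 1) → ℂ) → ℝ)
    (hE : ∀ a b, E a b =
      ∑ n, ‖hhat n * (∑ p, a p * lam n ^ (p : ℕ))
        - ∑ q, b q * lam n ^ (q : ℕ)‖ ^ 2)
    (a : Fin (P + 1) → ℂ) (b : Fin (Q + 1) → ℂ)
    (ha0 : a 0 = 1)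
    (hmin : ∀ a' b', a' 0 = 1 → E a b ≤ E a' b')
    (huniq : ∀ a' b', a' 0 = 1 → E a' b' = E a b → a' = a ∧ b' = b) :
    (∀ p, (a p).im = 0) ∧ (∀ q, (b q).im = 0) :=
  prony_ls_coefficients_real_general N P Q lam σ hσ hlam hhat hh E hE a b ha0 huniq
end

section
/- Let λ_1,…,λ_N ∈ ℂ and let σ be an involution of {1,…,N} with λ_{σ(n)} = conj(λ_n) for all n, and let ĥ ∈ ℂ^N satisfy ĥ_{σ(n)} = conj(ĥ_n). Let Ψ_{Q+1} ∈ ℂ^{N×(Q+1)} and Ψ_{P+1} ∈ ℂ^{N×(P+1)} be the Vandermonde matrices with entries λ_n^{k-1}, assume Ψ_{Q+1} has full column rank, and set P⊥ = I_N − Ψ_{Q+1}(Ψ_{Q+1}^H Ψ_{Q+1})^{-1} Ψ_{Q+1}^H. (i) If a ∈ ℂ^{P+1} is the unique minimizer, subject to a_0 = 1, of ‖P⊥ M a‖² where M ∈ ℂ^{N×(P+1)} has entries [M]_{n,p} = ĥ_n λ_n^{p-1}, then all entries of a are real. (ii) If moreover α_n = Σ_{p=0}^P a_p λ_n^p ≠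 0 for all n and b ∈ ℂ^{Q+1} is the unique minimizer of Σ_{n=1}^N | ĥ_n − (Σ_{q=0}^Q b_q λ_n^q)/α_n |², then all entries of b are real. -/
/-!
Complex conjugation combined with the reindexing `σ` maps the data to itself, so it carries
every candidate coefficient vector `x` to `star x` without changing either error: the
projector `P⊥` is built from a Gram matrix with real entries and therefore commutes with
this conjugate reflection, and the true error of `star b` is, term by term, the conjugate of
the true error of `b` at the reflected index. Uniqueness of the minimizers then forces
`star a = a` and `star b = b`.
-/

open Matrix Finset

section ConjReflection

variable {ι κ R : Type*} [CommSemiring R] [StarRing R] {σ : ι → ι}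

theorem Function.Bijective.sum_norm_sq_eq_of_star [Fintype ι] {E : Type*}
    [SeminormedAddCommGroup E] [StarAddMonoid E] [NormedStarGroup E]
    (hσ : Function.Bijective σ) {f g : ι → E}
    (h : ∀ i, f (σ i) = star (g i)) : ∑ i, ‖f i‖ ^ 2 = ∑ i, ‖g i‖ ^ 2 :=
  (Fintype.sum_bijective σ hσ _ _ fun i => by rw [h, norm_star]).symm

theorem Matrix.mulVec_star_apply_of_star [Fintype κ] {A : Matrix ι κ R}
    (hA : ∀ i k, A (σ i) k = star (A i k)) (x : κ → R) (i : ι) :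
    (A *ᵥ star x) (σ i) = star ((A *ᵥ x) i) := by
  simp only [mulVec, dotProduct, star_sum, star_mul', hA, Pi.star_apply]

theorem Matrix.mulVec_apply_of_star [Fintype ι] (hσ : Function.Bijective σ) {P : Matrix ι ι R}
    (hP : ∀ i j, P (σ i) (σ j) = star (P i j)) {v w : ι → R}
    (h : ∀ i, w (σ i) = star (v i)) (i : ι) :
    (P *ᵥ w) (σ i) = star ((P *ᵥ v) i) := by
  simp only [mulVec, dotProduct, star_sum, star_mul']
  exact (Fintype.sum_bijective σ hσ _ _ fun j => by rw [hP, h]).symm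

theorem Matrix.star_conjTranspose_mul_self_apply [Fintype ι] (hσ : Function.Bijective σ)
    {A : Matrix ι κ R} (hA : ∀ i k, A (σ i) k = star (A i k)) (k l : κ) :
    star ((Aᴴ * A) k l) = (Aᴴ * A) k l := by
  simp only [mul_apply, conjTranspose_apply, star_sum, star_mul', star_star]
  exact Fintype.sum_bijective σ hσ _ _ fun n => by rw [hA, hA, star_star, mul_comm]

theorem Matrix.star_mul_mul_conjTranspose_apply [Fintype ι] [Fintype κ] {A : Matrix ι κ R}
    (hA : ∀ i k, A (σ i) k = star (A i k)) {B : Matrix κ κ R}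
    (hB : ∀ k l, star (B k l) = B k l) (i j : ι) :
    (A * B * Aᴴ) (σ i) (σ j) = star ((A * B * Aᴴ) i j) := by
  simp only [mul_apply, conjTranspose_apply, star_sum, star_mul', star_star, hA, hB]

end ConjReflection

theorem Matrix.star_nonsing_inv_apply {κ R : Type*} [Fintype κ] [DecidableEq κ] [CommRing R]
    [StarRing R] {G : Matrix κ κ R} (hG : ∀ k l, star (G k l) = G k l) (k l : κ) :
    star (G⁻¹ k l) = G⁻¹ k l := by
  have hGreal : Gᴴ = Gᵀ := by ext k l; exact hG l k
  have hinv : (G⁻¹)ᴴ = (G⁻¹)ᵀ := by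
    rw [conjTranspose_nonsing_inv, transpose_nonsing_inv, hGreal]
  exact congrFun (congrFun hinv l) k

theorem Matrix.one_sub_mul_inv_mul_conjTranspose_apply_of_star {ι κ R : Type*} [Fintype ι]
    [DecidableEq ι] [Fintype κ] [DecidableEq κ] [CommRing R] [StarRing R] {σ : ι → ι}
    (hσ : Function.Bijective σ) {A : Matrix ι κ R} (hA : ∀ i k, A (σ i) k = star (A i k))
    (i j : ι) :
    (1 - A * (Aᴴ * A)⁻¹ * Aᴴ : Matrix ι ι R) (σ i) (σ j) =
      star ((1 - A * (Aᴴ * A)⁻¹ * Aᴴ : Matrix ι ι R) i j) := by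
  have hinv := star_nonsing_inv_apply (star_conjTranspose_mul_self_apply hσ hA)
  rw [sub_apply, sub_apply, star_sub, star_mul_mul_conjTranspose_apply hA hinv]
  congr 1
  simp only [one_apply, hσ.injective.eq_iff]
  split_ifs <;> simp

theorem prony_projection_coefficients_real_general
    (N P Q : ℕ) (lam : Fin N → ℂ)
    (σ : Fin N → Fin N) (hσ : Function.Involutive σ)
    (hlam : ∀ n, lam (σ n) = starRingEnd ℂ (lam n))
    (hhat : Fin N → ℂ)
    (hh : ∀ n, hhat (σ n) = starRingEnd ℂ (hhat n))
    (ΨQ : Matrix (Fin N) (Fin (Q + 1)) ℂ)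
    (hΨQ : ∀ n k, ΨQ n k = lam n ^ (k : ℕ))
    (Pperp : Matrix (Fin N) (Fin N) ℂ)
    (hPperp : Pperp = 1 - ΨQ * (ΨQᴴ * ΨQ)⁻¹ * ΨQᴴ)
    (M : Matrix (Fin N) (Fin (P + 1)) ℂ)
    (hM : ∀ n p, M n p = hhat n * lam n ^ (p : ℕ))
    -- (i) `a` is the unique minimizer of `‖Pperp M a‖²` subject to `a 0 = 1`
    (a : Fin (P + 1) → ℂ)
    (ha0 : a 0 = 1)
    (hauniq : ∀ a', a' 0 = 1 →
      (∑ n, ‖(Pperp *ᵥ (M *ᵥ a')) n‖ ^ 2 =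
        ∑ n, ‖(Pperp *ᵥ (M *ᵥ a)) n‖ ^ 2) → a' = a)
    -- (ii) `b` is the unique minimizer of the true error with denominator `α`
    (α : Fin N → ℂ)
    (hα : ∀ n, α n = ∑ p, a p * lam n ^ (p : ℕ))
    (b : Fin (Q + 1) → ℂ)
    (hbuniq : ∀ b' : Fin (Q + 1) → ℂ,
      (∑ n, ‖hhat n - (∑ q, b' q * lam n ^ (q : ℕ)) / α n‖ ^ 2 =
        ∑ n, ‖hhat n - (∑ q, b q * lam n ^ (q : ℕ)) / α n‖ ^ 2) → b' = b) :
    (∀ p, (a p).im = 0) ∧ (∀ q, (b q).im = 0) := by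
  simp only [starRingEnd_apply] at hlam hh
  have hΨQσ : ∀ n k, ΨQ (σ n) k = star (ΨQ n k) := by simp [hΨQ, hlam]
  have hMσ : ∀ n p, M (σ n) p = star (M n p) := by simp [hM, hlam, hh]
  have hPσ : ∀ m n, Pperp (σ m) (σ n) = star (Pperp m n) := by
    subst hPperp; exact one_sub_mul_inv_mul_conjTranspose_apply_of_star hσ.bijective hΨQσ
  have ha : star a = a := hauniq _ (by simp [ha0]) <| hσ.bijective.sum_norm_sq_eq_of_star <|
    mulVec_apply_of_star hσ.bijective hPσ (mulVec_star_apply_of_star hMσ a)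
  have hασ : ∀ n, α (σ n) = star (α n) := by
    intro n
    conv_lhs => rw [hα, ← ha]
    simp [hα, hlam, star_sum]
  have hb : star b = b := hbuniq _ <| hσ.bijective.sum_norm_sq_eq_of_star fun n => by
    simp [hh, hασ, hlam, star_sum]
  exact ⟨fun p => Complex.conj_eq_iff_im.mp (congrFun ha p),
    fun q => Complex.conj_eq_iff_im.mp (congrFun hb q)⟩

/-- Prony's projection method yields real-valued ARMA coefficients: (i) the
unique minimizer `a` (with `a 0 = 1`) of the projected modified error is
real-valued, and (ii) the unique minimizer `b` of the true error is
real-valued, for conjugate-symmetric data. -/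
theorem prony_projection_coefficients_real
    (N P Q : ℕ) (lam : Fin N → ℂ)
    (σ : Fin N → Fin N) (hσ : Function.Involutive σ)
    (hlam : ∀ n, lam (σ n) = starRingEnd ℂ (lam n))
    (hhat : Fin N → ℂ)
    (hh : ∀ n, hhat (σ n) = starRingEnd ℂ (hhat n))
    (ΨQ : Matrix (Fin N) (Fin (Q + 1)) ℂ)
    (hΨQ : ∀ n k, ΨQ n k = lam n ^ (k : ℕ))
    (ΨP : Matrix (Fin N) (Fin (P + 1)) ℂ)
    (hΨP : ∀ n k, ΨP n k = lam n ^ (k : ℕ))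
    (hfc : Function.Injective ΨQ.mulVec)
    (Pperp : Matrix (Fin N) (Fin N) ℂ)
    (hPperp : Pperp = 1 - ΨQ * (ΨQᴴ * ΨQ)⁻¹ * ΨQᴴ)
    (M : Matrix (Fin N) (Fin (P + 1)) ℂ)
    (hM : ∀ n p, M n p = hhat n * lam n ^ (p : ℕ))
    -- (i) `a` is the unique minimizer of `‖Pperp M a‖²` subject to `a 0 = 1`
    (a : Fin (P + 1) → ℂ)
    (ha0 : a 0 = 1)
    (hamin : ∀ a', a' 0 = 1 →
      ∑ n, ‖(Pperp *ᵥ (M *ᵥ a)) n‖ ^ 2 ≤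
        ∑ n, ‖(Pperp *ᵥ (M *ᵥ a')) n‖ ^ 2)
    (hauniq : ∀ a', a' 0 = 1 →
      (∑ n, ‖(Pperp *ᵥ (M *ᵥ a')) n‖ ^ 2 =
        ∑ n, ‖(Pperp *ᵥ (M *ᵥ a)) n‖ ^ 2) → a' = a)
    -- (ii) `b` is the unique minimizer of the true error with denominator `α`
    (α : Fin N → ℂ)
    (hα : ∀ n, α n = ∑ p, a p * lam n ^ (p : ℕ))
    (hα0 : ∀ n, α n ≠ 0)
    (b : Fin (Q + 1) → ℂ)
    (hbmin : ∀ b' : Fin (Q + 1) → ℂ,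
      ∑ n, ‖hhat n - (∑ q, b q * lam n ^ (q : ℕ)) / α n‖ ^ 2 ≤
        ∑ n, ‖hhat n - (∑ q, b' q * lam n ^ (q : ℕ)) / α n‖ ^ 2)
    (hbuniq : ∀ b' : Fin (Q + 1) → ℂ,
      (∑ n, ‖hhat n - (∑ q, b' q * lam n ^ (q : ℕ)) / α n‖ ^ 2 =
        ∑ n, ‖hhat n - (∑ q, b q * lam n ^ (q : ℕ)) / α n‖ ^ 2) → b' = b) :
    (∀ p, (a p).im = 0) ∧ (∀ q, (b q).im = 0) :=
  prony_projection_coefficients_real_general N P Q lam σ hσ hlam hhat hh ΨQ hΨQ Pperp hPperp M hM a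
    ha0 hauniq α hα b hbuniq
end
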